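/- arXiv:1512.01828 — 6 statements merged into one kernel-verified Lean document; each statement's English description precedes it below -/
import Mathlib

section
/- Let n ≥ 1 and let ψ ∈ ℂ^{2^n} be a unit vector. Then ψ satisfies the parity superselection rule if and only if the pure state it generates is even, i.e., if and only if for every odd-length list of matrices, each factor being aₛ or aₛ† for some 1 ≤ s ≤ n, the inner product ⟨ψ, M ψ⟩ of ψ with the product M of the list applied to ψ equals 0. -/
open Matrix Polynomial

/-- Binary strings of length `n`, indexing the `2^n`-dimensional Fock space. -/
abbrev Idx (n : ℕ) := Fin n → Fin 2

/-- Jordan–Wigner creation matrix `aₜ†` for mode `t`: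
`aₜ†|j₁…jₙ⟩ = (−1)^{j₁+⋯+j_{t−1}} |j₁…j_{t−1} 1 j_{t+1}…jₙ⟩` if `jₜ = 0`, and `0` if `jₜ = 1`. -/
noncomputable def adag (n : ℕ) (t : Fin n) : Matrix (Idx n) (Idx n) ℂ :=
  Matrix.of fun J K =>
    if K t = 0 ∧ J = Function.update K t 1
    then (-1 : ℂ) ^ (∑ s ∈ Finset.univ.filter (fun s => s < t), (K s : ℕ))
    else 0

/-- Jordan–Wigner annihilation matrix `aₜ`, the conjugate transpose of `aₜ†`. -/
noncomputable def ann (n : ℕ) (t : Fin n) : Matrix (Idx n) (Idx n) ℂ := (adag n t)ᴴ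

/-- A vector `ψ` satisfies the parity superselection rule if the particle numbers
`j₁+⋯+jₙ` have the same parity for all `J` with `⟨J|ψ⟩ ≠ 0`. -/
def PSSR {n : ℕ} (ψ : Idx n → ℂ) : Prop :=
  (∀ J, ψ J ≠ 0 → Even (∑ s, (J s : ℕ))) ∨ (∀ J, ψ J ≠ 0 → Odd (∑ s, (J s : ℕ)))

/-
Each `aₛ` and `aₛ†` changes the particle number `j₁+⋯+jₙ` by one, so the entry `(J, K)` of a
product of an odd number of them vanishes unless `J` and `K` have opposite parities; when `ψ` is
supported on one parity, every term of `⟨ψ, Mψ⟩` therefore vanishes. Conversely, if `ψ J ≠ 0` and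
`ψ K ≠ 0` with `J`, `K` of opposite parities, a word whose product is a nonzero multiple of the
matrix unit `|J⟩⟨K|` is built mode by mode: at mode `t` use `aₜ†` or `aₜ` to move `Kₜ` to `Jₜ` when
they differ, and `aₜ aₜ†` or `aₜ† aₜ` (which kill the other occupation) when they agree. Its
length is congruent to `|J| + |K|`, hence odd, and `⟨ψ, Mψ⟩ = conj (ψ J) · M J K · ψ K ≠ 0`.
-/

open Function

namespace Matrix

variable {ι R G : Type*}

def IsHomogeneous [Zero R] [Add G] (deg : ι → G) (d : G) (M : Matrix ι ι R) : Prop :=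
  ∀ a b, M a b ≠ 0 → deg a = d + deg b

def IsPartialMonomial [Zero R] (M : Matrix ι ι R) (f : ι → Option ι) : Prop :=
  ∀ a b, M a b ≠ 0 ↔ f b = some a

section Homogeneous

variable {deg : ι → G} {d e : G}

theorem IsHomogeneous.mul [Fintype ι] [NonUnitalNonAssocSemiring R] [AddSemigroup G]
    {A B : Matrix ι ι R} (hA : IsHomogeneous deg d A) (hB : IsHomogeneous deg e B) :
    IsHomogeneous deg (d + e) (A * B) := by
  intro a b hab
  obtain ⟨c, -, hc⟩ := Finset.exists_ne_zero_of_sum_ne_zero hab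
  rw [hA a c (left_ne_zero_of_mul hc), hB c b (right_ne_zero_of_mul hc), add_assoc]

theorem isHomogeneous_one [DecidableEq ι] [Zero R] [One R] [AddZeroClass G] (deg : ι → G) :
    IsHomogeneous deg 0 (1 : Matrix ι ι R) := by
  intro a b hab
  rw [zero_add, of_not_not fun h => hab (one_apply_ne h)]

theorem isHomogeneous_list_prod [Fintype ι] [DecidableEq ι] [Semiring R] [AddMonoid G]
    {L : List (Matrix ι ι R)} (hL : ∀ M ∈ L, IsHomogeneous deg d M) :
    IsHomogeneous deg (L.length • d) L.prod := by
  induction L with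
  | nil => simpa using isHomogeneous_one deg
  | cons M L ih =>
    rw [List.prod_cons, List.length_cons, succ_nsmul']
    exact (hL M List.mem_cons_self).mul (ih fun N hN => hL N (List.mem_cons_of_mem _ hN))

theorem IsHomogeneous.dotProduct_mulVec_eq_zero [Fintype ι] [NonUnitalNonAssocSemiring R]
    [Add G] {M : Matrix ι ι R} {u v : ι → R} {c c' : G} (hM : IsHomogeneous deg d M)
    (hu : ∀ a, u a ≠ 0 → deg a = c) (hv : ∀ b, v b ≠ 0 → deg b = c') (hd : d + c' ≠ c) :
    u ⬝ᵥ (M *ᵥ v) = 0 := by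
  refine Finset.sum_eq_zero fun a _ => ?_
  by_cases ha : u a = 0
  · rw [ha, zero_mul]
  refine mul_eq_zero_of_right _ (Finset.sum_eq_zero fun b _ => ?_)
  by_cases hb : v b = 0
  · rw [hb, mul_zero]
  by_cases hab : M a b = 0
  · simp [hab]
  exact absurd (by rw [← hu a ha, hM a b hab, hv b hb]) hd

end Homogeneous

section PartialMonomial

variable {M A B : Matrix ι ι R} {f g : ι → Option ι}

theorem isPartialMonomial_one [DecidableEq ι] [MulZeroOneClass R] [Nontrivial R] :
    IsPartialMonomial (1 : Matrix ι ι R) some := by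
  intro a b
  rw [Option.some_inj, one_apply]
  split_ifs with h <;> simp [h, eq_comm]

theorem IsPartialMonomial.mul [Fintype ι] [NonUnitalNonAssocSemiring R] [NoZeroDivisors R]
    (hA : IsPartialMonomial A g) (hB : IsPartialMonomial B f) :
    IsPartialMonomial (A * B) fun b => (f b).bind g := by
  have hB0 : ∀ c b, f b ≠ some c → B c b = 0 := fun c b h => of_not_not (mt (hB c b).mp h)
  intro a b
  change ∑ c, A a c * B c b ≠ 0 ↔ (f b).bind g = some a
  cases hfb : f b with
  | none =>
    simp only [Option.bind_none, reduceCtorEq, iff_false, not_not]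
    exact Finset.sum_eq_zero fun c _ => by rw [hB0 c b (by simp [hfb]), mul_zero]
  | some c =>
    have hoff : ∀ c', c' ≠ c → A a c' * B c' b = 0 := fun c' hc' => by
      rw [hB0 c' b (by simp [hfb, Ne.symm hc']), mul_zero]
    rw [Finset.sum_eq_single c (fun c' _ => hoff c') (by simp), Option.bind_some, ← hA,
      mul_ne_zero_iff, and_iff_left ((hB c b).mpr hfb)]

theorem IsPartialMonomial.isHomogeneous [Zero R] [Add G] {deg : ι → G} {d : G}
    (hM : IsPartialMonomial M f) (hf : ∀ b a, f b = some a → deg a = d + deg b) :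
    IsHomogeneous deg d M :=
  fun a b hab => hf b a ((hM a b).mp hab)

theorem IsPartialMonomial.dotProduct_mulVec_eq [Fintype ι] [DecidableEq ι]
    [NonUnitalNonAssocSemiring R] {J K : ι}
    (hM : IsPartialMonomial M fun b => if b = K then some J else none) (u v : ι → R) :
    u ⬝ᵥ (M *ᵥ v) = u J * (M J K * v K) := by
  have hM0 : ∀ a b, ¬(a = J ∧ b = K) → M a b = 0 := fun a b h =>
    of_not_not fun hab => h (by simpa [ite_eq_iff, eq_comm, and_comm] using (hM a b).mp hab)
  simp only [dotProduct, mulVec]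
  rw [Finset.sum_eq_single J, Finset.sum_eq_single K]
  · exact fun b _ hb => by rw [hM0 J b (by simp [hb]), zero_mul]
  · simp
  · exact fun a _ ha => mul_eq_zero_of_right _ (Finset.sum_eq_zero fun b _ => by
      rw [hM0 a b (by simp [ha]), zero_mul])
  · simp

end PartialMonomial

end Matrix

namespace JordanWigner

variable {n : ℕ}

def parity (J : Idx n) : ZMod 2 := (∑ s, (J s : ℕ) : ℕ)

theorem pssr_iff_exists_parity (ψ : Idx n → ℂ) :
    PSSR ψ ↔ ∃ c, ∀ J, ψ J ≠ 0 → parity J = c := by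
  simp only [PSSR, parity, ← ZMod.natCast_eq_zero_iff_even, ← ZMod.natCast_eq_one_iff_odd]
  constructor
  · rintro (h | h)
    exacts [⟨0, h⟩, ⟨1, h⟩]
  · rintro ⟨c, h⟩
    fin_cases c
    exacts [Or.inl h, Or.inr h]

theorem parity_update (L : Idx n) (t : Fin n) (a : Fin 2) :
    parity (update L t a) + (L t : ℕ) = parity L + (a : ℕ) := by
  have hsplit (K : Idx n) :
      parity K = (K t : ℕ) + ∑ s ∈ Finset.univ.erase t, ((K s : ℕ) : ZMod 2) := by
    rw [parity, Nat.cast_sum, (Finset.add_sum_erase _ _ (Finset.mem_univ t)).symm]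
  rw [hsplit, hsplit L, update_self,
    Finset.sum_congr rfl fun s hs => by rw [update_of_ne (Finset.ne_of_mem_erase hs)]]
  ring

def modeTransition (t : Fin n) (a b : Fin 2) (L : Idx n) : Option (Idx n) :=
  if L t = b then some (update L t a) else none

theorem parity_of_modeTransition_eq_some {t : Fin n} {a b : Fin 2} {L L' : Idx n}
    (h : modeTransition t a b L = some L') :
    parity L' = ((a : ℕ) + (b : ℕ) : ZMod 2) + parity L := by
  obtain ⟨hb, rfl⟩ : L t = b ∧ update L t a = L' := by simpa [modeTransition] using h
  have := parity_update L t a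
  rw [hb] at this
  have h2 : (2 : ZMod 2) = 0 := rfl
  linear_combination this - ((b : ℕ) : ZMod 2) * h2

theorem modeTransition_bind (t : Fin n) (a b c : Fin 2) (L : Idx n) :
    (modeTransition t c b L).bind (modeTransition t a c) = modeTransition t a b L := by
  by_cases h : L t = b <;> simp [modeTransition, h]

theorem isPartialMonomial_adag (t : Fin n) :
    (adag n t).IsPartialMonomial (modeTransition t 1 0) := by
  intro J K
  rw [adag, of_apply, ite_ne_right_iff, and_iff_left (by simp)]
  simp only [modeTransition, Option.ite_none_right_eq_some, Option.some_inj, eq_comm (a := J)]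

theorem isPartialMonomial_ann (t : Fin n) :
    (ann n t).IsPartialMonomial (modeTransition t 0 1) := by
  intro J K
  rw [ann, conjTranspose_apply, star_ne_zero, isPartialMonomial_adag]
  simp only [modeTransition, Option.ite_none_right_eq_some, Option.some_inj, update_eq_iff]
  grind

theorem isHomogeneous_parity_adag (t : Fin n) : (adag n t).IsHomogeneous parity 1 :=
  (isPartialMonomial_adag t).isHomogeneous fun _ _ h => by
    simpa using parity_of_modeTransition_eq_some h

theorem isHomogeneous_parity_ann (t : Fin n) : (ann n t).IsHomogeneous parity 1 :=
  (isPartialMonomial_ann t).isHomogeneous fun _ _ h => by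
    simpa using parity_of_modeTransition_eq_some h

noncomputable def modeWord (t : Fin n) : Fin 2 → Fin 2 → List (Matrix (Idx n) (Idx n) ℂ)
  | 0, 0 => [ann n t, adag n t]
  | 1, 0 => [adag n t]
  | 0, 1 => [ann n t]
  | 1, 1 => [adag n t, ann n t]

theorem isPartialMonomial_modeWord_prod (t : Fin n) (a b : Fin 2) :
    (modeWord t a b).prod.IsPartialMonomial (modeTransition t a b) := by
  fin_cases a <;> fin_cases b
  · simpa [modeWord, modeTransition_bind] using
      (isPartialMonomial_ann t).mul (isPartialMonomial_adag t)
  · simpa [modeWord] using isPartialMonomial_ann t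
  · simpa [modeWord] using isPartialMonomial_adag t
  · simpa [modeWord, modeTransition_bind] using
      (isPartialMonomial_adag t).mul (isPartialMonomial_ann t)

def modeTransitions (ts : List (Fin n)) (J K L : Idx n) : Option (Idx n) :=
  if ∀ t ∈ ts, L t = K t then some fun s => if s ∈ ts then J s else L s else none

theorem modeTransitions_cons {t : Fin n} {ts : List (Fin n)} (ht : t ∉ ts) (J K L : Idx n) :
    modeTransitions (t :: ts) J K L =
      (modeTransitions ts J K L).bind (modeTransition t (J t) (K t)) := by
  by_cases hL : ∀ t' ∈ ts, L t' = K t'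
  · have hupd : update (fun s => if s ∈ ts then J s else L s) t (J t) =
        fun s => if s ∈ t :: ts then J s else L s := by
      funext s
      by_cases hs : s = t <;> simp [hs]
    simp only [modeTransitions, modeTransition, List.forall_mem_cons, if_pos hL, Option.bind_some,
      if_neg ht, and_iff_left hL, hupd]
  · simp [modeTransitions, hL]

theorem isPartialMonomial_flatMap_modeWord_prod (J K : Idx n) {ts : List (Fin n)}
    (hts : ts.Nodup) :
    (ts.flatMap fun t => modeWord t (J t) (K t)).prod.IsPartialMonomial
      (modeTransitions ts J K) := by
  induction ts with
  | nil =>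
    rw [show modeTransitions [] J K = some from funext fun L => by simp [modeTransitions]]
    exact isPartialMonomial_one
  | cons t ts ih =>
    obtain ⟨ht, hts⟩ := List.nodup_cons.mp hts
    rw [List.flatMap_cons, List.prod_append, funext (modeTransitions_cons ht J K)]
    exact (isPartialMonomial_modeWord_prod t (J t) (K t)).mul (ih hts)

noncomputable def jwWord (J K : Idx n) : List (Matrix (Idx n) (Idx n) ℂ) :=
  (List.finRange n).flatMap fun t => modeWord t (J t) (K t)

theorem isPartialMonomial_jwWord_prod (J K : Idx n) :
    (jwWord J K).prod.IsPartialMonomial fun L => if L = K then some J else none := by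
  have hpattern :
      modeTransitions (List.finRange n) J K = fun L => if L = K then some J else none := by
    funext L
    simp [modeTransitions, ← funext_iff]
  rw [← hpattern]
  exact isPartialMonomial_flatMap_modeWord_prod J K (List.nodup_finRange n)

theorem exists_eq_ann_or_adag_of_mem_jwWord {J K : Idx n} {M : Matrix (Idx n) (Idx n) ℂ}
    (hM : M ∈ jwWord J K) :
    ∃ s : Fin n, M = ann n s ∨ M = adag n s := by
  obtain ⟨t, -, hM⟩ := List.mem_flatMap.mp hM
  refine ⟨t, ?_⟩
  generalize J t = a at hM
  generalize K t = b at hM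
  fin_cases a <;> fin_cases b <;> simp [modeWord] at hM <;> tauto

theorem natCast_length_modeWord (t : Fin n) (a b : Fin 2) :
    ((modeWord t a b).length : ZMod 2) = (a : ℕ) + (b : ℕ) := by
  fin_cases a <;> fin_cases b <;> simp [modeWord] <;> decide

theorem natCast_length_jwWord (J K : Idx n) :
    ((jwWord J K).length : ZMod 2) = parity J + parity K := by
  rw [jwWord, List.length_flatMap, Nat.cast_list_sum, List.map_map, ← Fin.sum_univ_def]
  simp only [Function.comp_def, natCast_length_modeWord, parity, Nat.cast_sum,
    Finset.sum_add_distrib]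

theorem odd_length_jwWord {J K : Idx n} (h : parity J ≠ parity K) : Odd (jwWord J K).length := by
  rw [← ZMod.natCast_eq_one_iff_odd, natCast_length_jwWord]
  generalize parity J = x at h
  generalize parity K = y at h
  revert x y
  decide

end JordanWigner

open JordanWigner

theorem pssr_iff_even_general (n : ℕ) (ψ : Idx n → ℂ) :
    PSSR ψ ↔
      ∀ L : List (Matrix (Idx n) (Idx n) ℂ),
        (∀ M ∈ L, ∃ s : Fin n, M = ann n s ∨ M = adag n s) →
        Odd L.length →
        star ψ ⬝ᵥ (L.prod *ᵥ ψ) = 0 := by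
  rw [pssr_iff_exists_parity]
  constructor
  · rintro ⟨c, hc⟩ L hL hodd
    have hM : ∀ M ∈ L, M.IsHomogeneous parity 1 := fun M hM => by
      obtain ⟨s, rfl | rfl⟩ := hL M hM
      exacts [isHomogeneous_parity_ann s, isHomogeneous_parity_adag s]
    refine (isHomogeneous_list_prod hM).dotProduct_mulVec_eq_zero
      (fun J hJ => hc J (star_ne_zero.mp hJ)) hc ?_
    rw [nsmul_one, ZMod.natCast_eq_one_iff_odd.mpr hodd]
    simp
  · intro h
    by_contra! hmixed
    obtain ⟨K, hK, -⟩ := hmixed 0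
    obtain ⟨J, hJ, hJK⟩ := hmixed (parity K)
    have hodd := odd_length_jwWord hJK
    have hP := isPartialMonomial_jwWord_prod J K
    have hval := hP.dotProduct_mulVec_eq (star ψ) ψ
    rw [h _ (fun _ => exists_eq_ann_or_adag_of_mem_jwWord) hodd, Pi.star_apply] at hval
    exact mul_ne_zero (star_ne_zero.mpr hJ) (mul_ne_zero ((hP J K).mpr (by simp)) hK) hval.symm

/-- A unit vector `ψ ∈ ℂ^{2^n}` satisfies the parity superselection rule
iff the pure state it generates is even: for every odd-length list of matrices, each factor
being `aₛ` or `aₛ†` for some mode `s`, the expectation `⟨ψ, M ψ⟩` of the product `M` vanishes. -/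
theorem pssr_iff_even (n : ℕ) (hn : 1 ≤ n) (ψ : Idx n → ℂ) (hψ : star ψ ⬝ᵥ ψ = 1) :
    PSSR ψ ↔
      ∀ L : List (Matrix (Idx n) (Idx n) ℂ),
        (∀ M ∈ L, ∃ s : Fin n, M = ann n s ∨ M = adag n s) →
        Odd L.length →
        star ψ ⬝ᵥ (L.prod *ᵥ ψ) = 0 :=
  pssr_iff_even_general n ψ
end

section
/- Let n ≥ 1. For all binary strings J, K ∈ {0,1}ⁿ, the matrix A_{JK} equals the rank-one matrix unit |j₁…jₙ⟩⟨k₁…kₙ| (the matrix whose only nonzero entry is a 1 in row J, column K). -/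
open Matrix Polynomial

/-- `c_{jₛ}† = aₛaₛ†` if `jₛ = 0` and `aₛ†` if `jₛ = 1`. -/
noncomputable def cdag (n : ℕ) (s : Fin n) (j : Fin 2) : Matrix (Idx n) (Idx n) ℂ :=
  if j = 0 then ann n s * adag n s else adag n s

/-- `c_{kₛ} = aₛaₛ†` if `kₛ = 0` and `aₛ` if `kₛ = 1`. -/
noncomputable def cann (n : ℕ) (s : Fin n) (k : Fin 2) : Matrix (Idx n) (Idx n) ℂ :=
  if k = 0 then ann n s * adag n s else ann n s

/-- `A_{JK} = c_{j₁}† c_{j₂}† ⋯ c_{jₙ}† c_{kₙ} ⋯ c_{k₂} c_{k₁}`. -/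
noncomputable def AJK (n : ℕ) (J K : Idx n) : Matrix (Idx n) (Idx n) ℂ :=
  (((List.finRange n).map fun s => cdag n s (J s)).prod) *
  ((((List.finRange n).reverse).map fun s => cann n s (K s)).prod)

/-!
The creation half `c_{j₁}† ⋯ c_{jₙ}†` of `A_{JK}` equals `|J⟩⟨0…0|`: on a basis vector the factor
`c_{jₜ}†` vanishes unless bit `t` is `0`, and then sets it to `jₜ`. Since the factors of the lower
modes act later, every Jordan–Wigner sign is a parity of bits that are still `0`, hence `+1`.
The annihilation half is the adjoint of the creation half for `K`, i.e. `|0…0⟩⟨K|`, so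
`A_{JK} = |J⟩⟨0…0|0…0⟩⟨K| = |J⟩⟨K|`.
-/

section

open Function

variable {n : ℕ}

def jwSign (t : Fin n) (L : Idx n) : ℂ :=
  (-1 : ℂ) ^ (∑ s ∈ Finset.univ.filter (fun s => s < t), (L s : ℕ))

lemma jwSign_mul_self (t : Fin n) (L : Idx n) : jwSign t L * jwSign t L = 1 := by
  rw [jwSign, ← pow_add]
  exact Even.neg_one_pow ⟨_, rfl⟩

lemma jwSign_eq_one {t : Fin n} {L : Idx n} (h : ∀ s < t, L s = 0) : jwSign t L = 1 := by
  rw [jwSign, Finset.sum_eq_zero fun s hs => by simp [h s (Finset.mem_filter.mp hs).2], pow_zero]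

lemma adag_apply (t : Fin n) (L L' : Idx n) :
    adag n t L L' = if L' t = 0 ∧ L = update L' t 1 then jwSign t L' else 0 := rfl

lemma adag_mulVec_single (t : Fin n) (L : Idx n) :
    adag n t *ᵥ Pi.single L 1 = if L t = 0 then jwSign t L • Pi.single (update L t 1) 1 else 0 := by
  ext L'
  simp only [mulVec_single_one, col_apply, adag_apply]
  split_ifs <;> simp_all

lemma ann_mulVec_single_update {t : Fin n} {L : Idx n} (h : L t = 0) :
    ann n t *ᵥ Pi.single (update L t 1) 1 = jwSign t L • Pi.single L 1 := by
  ext L'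
  simp only [ann, mulVec_single_one, col_apply, conjTranspose_apply, adag_apply]
  by_cases hL' : L' = L
  · subst hL'
    simp [h, jwSign]
  · have : ¬ (L' t = 0 ∧ update L t 1 = update L' t 1) := fun ⟨h', hu⟩ => hL' <| by
      funext s
      by_cases hs : s = t
      · rw [hs, h, h']
      · simpa [hs] using (congrFun hu s).symm
    simp [this, hL']

lemma ann_mul_adag_mulVec_single (t : Fin n) (L : Idx n) :
    (ann n t * adag n t) *ᵥ Pi.single L 1 = if L t = 0 then Pi.single L 1 else 0 := by
  rw [← mulVec_mulVec, adag_mulVec_single]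
  split_ifs with h
  · rw [mulVec_smul, ann_mulVec_single_update h, smul_smul, jwSign_mul_self, one_smul]
  · exact mulVec_zero _

lemma cdag_mulVec_single (t : Fin n) (j : Fin 2) (L : Idx n) :
    cdag n t j *ᵥ Pi.single L 1 =
      if L t = 0 then (if j = 0 then 1 else jwSign t L) • Pi.single (update L t j) 1 else 0 := by
  rw [cdag]
  split_ifs with hj hL hL
  · rw [ann_mul_adag_mulVec_single, if_pos hL, hj, ← hL, update_eq_self, one_smul]
  · rw [ann_mul_adag_mulVec_single, if_neg hL]
  · rw [adag_mulVec_single, if_pos hL, (by omega : j = 1)]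
  · rw [adag_mulVec_single, if_neg hL]

lemma cdag_prefix_prod_mulVec_single (J : Idx n) {m : ℕ} (hm : m ≤ n) (L : Idx n) :
    (((List.finRange n).take m).map fun s => cdag n s (J s)).prod *ᵥ Pi.single L 1 =
      if ∀ s : Fin n, (s : ℕ) < m → L s = 0 then
        Pi.single (fun s : Fin n => if (s : ℕ) < m then J s else L s) 1 else 0 := by
  induction m generalizing L with
  | zero =>
    rw [List.take_zero, List.map_nil, List.prod_nil, one_mulVec]
    simp
  | succ m ih =>
    obtain ⟨t, rfl⟩ : ∃ t : Fin n, (t : ℕ) = m := ⟨⟨m, hm⟩, rfl⟩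
    have hfill : (fun s : Fin n => if (s : ℕ) < t then J s else update L t (J t) s) =
        fun s : Fin n => if (s : ℕ) < t + 1 then J s else L s := by
      funext s
      rcases lt_trichotomy s t with hs | rfl | hs
      · simp [Fin.lt_def.mp hs, (by omega : (s : ℕ) < t + 1)]
      · simp
      · simp only [update_of_ne hs.ne', if_neg (by omega : ¬ (s : ℕ) < t),
          if_neg (by omega : ¬ (s : ℕ) < t + 1)]
    rw [List.map_take, List.prod_take_succ _ _ (by simp), ← mulVec_mulVec,
      List.getElem_map, List.getElem_finRange, Fin.cast_mk, Fin.eta, cdag_mulVec_single]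
    by_cases hLt : L t = 0
    · have hlow : (∀ s : Fin n, (s : ℕ) < t → update L t (J t) s = 0) ↔
          ∀ s : Fin n, (s : ℕ) < t + 1 → L s = 0 := by
        refine ⟨fun h s hs => ?_, fun h s hs => ?_⟩
        · rcases (by omega : (s : ℕ) < t ∨ s = t) with hs | rfl
          · simpa [Fin.ne_of_lt hs] using h s hs
          · exact hLt
        · simpa [Fin.ne_of_lt hs] using h s (by omega)
      rw [if_pos hLt, mulVec_smul, ← List.map_take, ih (by omega), hfill, if_congr hlow rfl rfl]
      by_cases hlow' : ∀ s : Fin n, (s : ℕ) < t + 1 → L s = 0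
      · rw [if_pos hlow', jwSign_eq_one fun s hs => hlow' s (by omega), ite_self, one_smul]
      · rw [if_neg hlow', smul_zero]
    · rw [if_neg hLt, mulVec_zero, if_neg fun h => hLt (h t (by omega))]

lemma cdag_prod_eq_single (J : Idx n) :
    ((List.finRange n).map fun s => cdag n s (J s)).prod = single J 0 1 := by
  ext L' L
  have h := congrFun (cdag_prefix_prod_mulVec_single J le_rfl L) L'
  rw [List.take_of_length_le (by simp), mulVec_single_one, col_apply] at h
  rw [h, single_apply]
  by_cases hL : L = 0
  · subst hL
    simp [Pi.single_apply, eq_comm]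
  · rw [if_neg fun h' => hL (funext fun s => h' s s.isLt), if_neg fun h' => hL h'.2.symm,
      Pi.zero_apply]

lemma cdag_conjTranspose (s : Fin n) (j : Fin 2) : (cdag n s j)ᴴ = cann n s j := by
  unfold cdag cann ann
  split_ifs <;> simp [conjTranspose_mul]

lemma cann_reverse_prod_eq_single (K : Idx n) :
    ((List.finRange n).reverse.map fun s => cann n s (K s)).prod = single 0 K 1 := by
  rw [← star_one ℂ, ← conjTranspose_single, ← cdag_prod_eq_single, conjTranspose_list_prod,
    List.map_map, List.map_reverse]
  simp only [Function.comp_def, cdag_conjTranspose]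

end

theorem AJK_eq_stdBasisMatrix_general (n : ℕ) (J K : Idx n) :
    AJK n J K = Matrix.single J K 1 := by
  rw [AJK, cdag_prod_eq_single, cann_reverse_prod_eq_single, single_mul_single_same, one_mul]

/-- For all binary strings `J, K`, the matrix `A_{JK}` equals the
rank-one matrix unit `|j₁…jₙ⟩⟨k₁…kₙ|`. -/
theorem AJK_eq_stdBasisMatrix (n : ℕ) (hn : 1 ≤ n) (J K : Idx n) :
    AJK n J K = Matrix.single J K 1 :=
  AJK_eq_stdBasisMatrix_general n J K
end

section
/- Let n = 2 and let ψ = c₀₀|00⟩ + c₀₁|01⟩ + c₁₀|10⟩ + c₁₁|11⟩ be a unit vector in ℂ⁴. Let Λ₁ be the 2×2 matrix with entries Λ₁ = [[⟨ψ, a₁a₁†ψ⟩, ⟨ψ, a₁†ψ⟩], [⟨ψ, a₁ψ⟩, ⟨ψ, a₁†a₁ψ⟩]] and Λ₂ the 2×2 matrix with entries Λ₂ = [[⟨ψ, a₂a₂†ψ⟩, ⟨ψ, a₂†ψ⟩], [⟨ψ, a₂ψ⟩, ⟨ψ, a₂†a₂ψ⟩]]. Then Λ₁ and Λ₂ have the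 same characteristic polynomial (equivalently, the same spectrum) if and only if Re(c₀₀ c₁₁ · conj(c₀₁) · conj(c₁₀)) = 0. -/
open Matrix Polynomial

/-- Expectation value `⟨ψ, M ψ⟩` (antilinear in the first argument). -/
noncomputable def ev {n : ℕ} (ψ : Idx n → ℂ) (M : Matrix (Idx n) (Idx n) ℂ) : ℂ :=
  star ψ ⬝ᵥ (M *ᵥ ψ)

/-- Mode-reduced density matrix of the first mode (`n = 2`). -/
noncomputable def Lam1 (ψ : Idx 2 → ℂ) : Matrix (Fin 2) (Fin 2) ℂ :=
  !![ev ψ (ann 2 0 * adag 2 0), ev ψ (adag 2 0);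
     ev ψ (ann 2 0),            ev ψ (adag 2 0 * ann 2 0)]

/-- Mode-reduced density matrix of the second mode (`n = 2`). -/
noncomputable def Lam2 (ψ : Idx 2 → ℂ) : Matrix (Fin 2) (Fin 2) ℂ :=
  !![ev ψ (ann 2 1 * adag 2 1), ev ψ (adag 2 1);
     ev ψ (ann 2 1),            ev ψ (adag 2 1 * ann 2 1)]

lemma sum_idx2 (f : (Fin 2 → Fin 2) → ℂ) : ∑ J, f J = f ![0,0] + f ![0,1] + f ![1,0] + f ![1,1] := by
  have h : (Finset.univ : Finset (Fin 2 → Fin 2)) = {![0,0],![0,1],![1,0],![1,1]} := by decide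
  rw [h, Finset.sum_insert (by decide), Finset.sum_insert (by decide),
    Finset.sum_insert (by decide), Finset.sum_singleton]
  ring

set_option maxHeartbeats 1000000 in
lemma Lam1_eq (ψ : Idx 2 → ℂ) : Lam1 ψ =
    !![(starRingEnd ℂ) (ψ ![0,0]) * ψ ![0,0] + (starRingEnd ℂ) (ψ ![0,1]) * ψ ![0,1],
       (starRingEnd ℂ) (ψ ![1,0]) * ψ ![0,0] + (starRingEnd ℂ) (ψ ![1,1]) * ψ ![0,1];
       (starRingEnd ℂ) (ψ ![0,0]) * ψ ![1,0] + (starRingEnd ℂ) (ψ ![0,1]) * ψ ![1,1],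
       (starRingEnd ℂ) (ψ ![1,0]) * ψ ![1,0] + (starRingEnd ℂ) (ψ ![1,1]) * ψ ![1,1]] := by
  ext i j
  fin_cases i <;> fin_cases j <;>
    (simp only [Lam1, ev, dotProduct, mulVec, Matrix.mul_apply, sum_idx2, adag, ann,
        conjTranspose_apply, Matrix.of_apply, Pi.star_apply, cons_val', cons_val_zero,
        cons_val_one, head_cons, empty_val', cons_val_fin_one, head_fin_const];
     norm_num [Function.update, Finset.filter_eq_empty_iff];
     simp (config := { decide := true }) only [if_true, if_false];
     norm_num [show (Finset.filter (fun s : Fin 2 => s = 0) Finset.univ) = {0} from by decide,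
       Finset.sum_singleton, map_zero, map_neg, _root_.map_one, map_pow];
     try ring)

set_option maxHeartbeats 1000000 in
lemma Lam2_eq (ψ : Idx 2 → ℂ) : Lam2 ψ =
    !![(starRingEnd ℂ) (ψ ![0,0]) * ψ ![0,0] + (starRingEnd ℂ) (ψ ![1,0]) * ψ ![1,0],
       (starRingEnd ℂ) (ψ ![0,1]) * ψ ![0,0] - (starRingEnd ℂ) (ψ ![1,1]) * ψ ![1,0];
       (starRingEnd ℂ) (ψ ![0,0]) * ψ ![0,1] - (starRingEnd ℂ) (ψ ![1,0]) * ψ ![1,1],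
       (starRingEnd ℂ) (ψ ![0,1]) * ψ ![0,1] + (starRingEnd ℂ) (ψ ![1,1]) * ψ ![1,1]] := by
  ext i j
  fin_cases i <;> fin_cases j <;>
    (simp only [Lam2, ev, dotProduct, mulVec, Matrix.mul_apply, sum_idx2, adag, ann,
        conjTranspose_apply, Matrix.of_apply, Pi.star_apply, cons_val', cons_val_zero,
        cons_val_one, head_cons, empty_val', cons_val_fin_one, head_fin_const];
     norm_num [Function.update, Finset.filter_eq_empty_iff];
     simp (config := { decide := true }) only [if_true, if_false];
     norm_num [show (Finset.filter (fun s : Fin 2 => s = 0) Finset.univ) = {0} from by decide,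
       Finset.sum_singleton, map_zero, map_neg, _root_.map_one, map_pow];
     try ring)

lemma charpoly_fin2 (M : Matrix (Fin 2) (Fin 2) ℂ) :
    M.charpoly = X^2 - C M.trace * X + C M.det := by
  rw [Matrix.charpoly, Matrix.det_fin_two]
  simp [charmatrix_apply, Matrix.trace_fin_two, Matrix.det_fin_two]
  ring

/-- For a two-mode unit vector `ψ`, the mode-reduced density matrices
`Λ₁` and `Λ₂` have the same characteristic polynomial (equivalently the same spectrum)
iff `Re(c₀₀ c₁₁ conj(c₀₁) conj(c₁₀)) = 0`. -/
theorem equispectral_iff_re_eq_zero (ψ : Idx 2 → ℂ) (hψ : star ψ ⬝ᵥ ψ = 1) :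
    (Lam1 ψ).charpoly = (Lam2 ψ).charpoly ↔
      (ψ ![0, 0] * ψ ![1, 1] *
        (starRingEnd ℂ) (ψ ![0, 1]) * (starRingEnd ℂ) (ψ ![1, 0])).re = 0 := by
  set z := ψ ![0, 0] * ψ ![1, 1] * (starRingEnd ℂ) (ψ ![0, 1]) * (starRingEnd ℂ) (ψ ![1, 0])
    with hz
  have htr : (Lam1 ψ).trace = (Lam2 ψ).trace := by
    rw [Lam1_eq, Lam2_eq]
    simp [Matrix.trace_fin_two_of]
    ring
  have key : (Lam1 ψ).det - (Lam2 ψ).det = -2 * (z + (starRingEnd ℂ) z) := by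
    rw [Lam1_eq, Lam2_eq, hz]
    simp only [Matrix.det_fin_two_of, _root_.map_mul, Complex.conj_conj]
    ring
  rw [charpoly_fin2, charpoly_fin2, htr]
  constructor
  · intro h
    have hC : (C (Lam1 ψ).det : ℂ[X]) = C (Lam2 ψ).det := by linear_combination h
    have hd : (Lam1 ψ).det = (Lam2 ψ).det := Polynomial.C_injective hC
    rw [← sub_eq_zero, key, Complex.add_conj] at hd
    have h3 : (2 * z.re : ℝ) = 0 := by
      rcases mul_eq_zero.mp hd with h' | h'
      · norm_num at h'
      · exact_mod_cast h'
    linarith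
  · intro h
    have hd : (Lam1 ψ).det = (Lam2 ψ).det := by
      rw [← sub_eq_zero, key, Complex.add_conj, h]
      norm_num
    rw [hd]
end

section
/- Let n = 2 and let ψ = c₀₀|00⟩ + c₀₁|01⟩ + c₁₀|10⟩ + c₁₁|11⟩ be a unit vector in ℂ⁴. With Λ₁ = [[⟨ψ, a₁a₁†ψ⟩, ⟨ψ, a₁†ψ⟩], [⟨ψ, a₁ψ⟩, ⟨ψ, a₁†a₁ψ⟩]] and Λ₂ = [[⟨ψ, a₂a₂†ψ⟩, ⟨ψ, a₂†ψ⟩], [⟨ψ, a₂ψ⟩, ⟨ψ, a₂†a₂ψ⟩]], one has Tr(Λ₁²) − Tr(Λ₂²) = 8 · Re(c₀₀ c₁₁ · conj(c₀₁) · conj(c₁₀)). -/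
open Matrix Polynomial

lemma sum_idx (f : Idx 2 → ℂ) : ∑ J, f J = f ![0,0] + f ![0,1] + f ![1,0] + f ![1,1] := by
  rw [← (finTwoArrowEquiv (Fin 2)).symm.sum_comp]
  simp [Fintype.sum_prod_type, Fin.sum_univ_two, finTwoArrowEquiv]
  ring

/-- For a two-mode unit vector `ψ`,
`Tr(Λ₁²) − Tr(Λ₂²) = 8 Re(c₀₀ c₁₁ conj(c₀₁) conj(c₁₀))`. -/
theorem trace_sq_difference (ψ : Idx 2 → ℂ) (hψ : star ψ ⬝ᵥ ψ = 1) :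
    (Lam1 ψ * Lam1 ψ).trace - (Lam2 ψ * Lam2 ψ).trace =
      ((8 * (ψ ![0, 0] * ψ ![1, 1] *
        (starRingEnd ℂ) (ψ ![0, 1]) * (starRingEnd ℂ) (ψ ![1, 0])).re : ℝ) : ℂ) := by
  rw [show ((8 * (ψ ![0, 0] * ψ ![1, 1] *
        (starRingEnd ℂ) (ψ ![0, 1]) * (starRingEnd ℂ) (ψ ![1, 0])).re : ℝ) : ℂ)
      = 4 * ((ψ ![0, 0] * ψ ![1, 1] * (starRingEnd ℂ) (ψ ![0, 1]) * (starRingEnd ℂ) (ψ ![1, 0]))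
        + (starRingEnd ℂ) (ψ ![0, 0] * ψ ![1, 1] * (starRingEnd ℂ) (ψ ![0, 1]) *
          (starRingEnd ℂ) (ψ ![1, 0]))) by
      rw [Complex.add_conj]; push_cast; ring]
  simp only [Lam1, Lam2, Matrix.trace_fin_two, Matrix.mul_apply, Fin.sum_univ_two,
    Matrix.cons_val', Matrix.cons_val_zero, Matrix.cons_val_one, Matrix.head_cons,
    Matrix.empty_val', Matrix.cons_val_fin_one, Matrix.head_fin_const]
  simp only [ev, Matrix.mulVec, dotProduct, Matrix.mul_apply, Pi.star_apply, RCLike.star_def]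
  simp only [sum_idx]
  simp +decide [adag, ann, Matrix.conjTranspose_apply, Finset.sum_filter, Fin.sum_univ_two]
  ring
end

section
/- Let n ≥ 2, 1 ≤ m < n, and let ψ ∈ ℂ^{2^n} be a unit vector satisfying the parity superselection rule. Then the mode-reduced density matrices Λ₁ (of size 2^m) and Λ₂ (of size 2^{n−m}) of ψ have the same nonzero spectrum with multiplicities: X^{2^m} · charpoly(Λ₂)(X) = X^{2^{n−m}} · charpoly(Λ₁)(X) as polynomials. -/
/-!
Let `M` be the `2^m × 2^(n-m)` matrix of amplitudes `M a b = ψ(a, b)`. In the occupation-number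
basis every ordered string of `c†`'s is a signed partial permutation of configurations. The strings
of the first `m` modes only see empty modes below them, so they carry no sign and `Λ₁ = M Mᴴ`.
The strings of the last `n - m` modes see the configuration `a` of the first block and pick up
`(-1)^(|K| |a|) (-1)^(|J| |a|)`; under the parity superselection rule every nonzero term has
`|K| ≡ |J| (mod 2)`, so the signs cancel and `Λ₂ = (Mᴴ M)ᵀ`. Finally `M Mᴴ` and `Mᴴ M` have the
same nonzero spectrum (`Matrix.charpoly_mul_comm'`).
-/

open Matrix Polynomial

/-- `A^{(i)}_{KJ} = c_{k₁}† ⋯ c_{k_m}† c_{j_m} ⋯ c_{j₁}` built from the ladder matrices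
of the modes selected by `f`. -/
noncomputable def Asub (n m : ℕ) (f : Fin m → Fin n) (K J : Idx m) :
    Matrix (Idx n) (Idx n) ℂ :=
  (((List.finRange m).map fun s => cdag n (f s) (K s)).prod) *
  ((((List.finRange m).reverse).map fun s => cann n (f s) (J s)).prod)

/-- The mode-reduced density matrix of `ψ` on the modes selected by `f`:
entries `Λ(J,K) = ⟨ψ, A_{KJ} ψ⟩`. -/
noncomputable def modeRDM (n m : ℕ) (f : Fin m → Fin n) (ψ : Idx n → ℂ) :
    Matrix (Idx m) (Idx m) ℂ :=
  Matrix.of fun J K => star ψ ⬝ᵥ (Asub n m f K J *ᵥ ψ)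

/-- The inclusion of the last `n − m` modes: `s ↦ m + s`. -/
def emb2 (n m : ℕ) (h : m ≤ n) : Fin (n - m) → Fin n :=
  fun s => ⟨m + (s : ℕ), by have := s.isLt; omega⟩

namespace Matrix

variable {α R : Type*}

def shiftMatrix [DecidableEq α] [Zero R] (P : α → Prop) [DecidablePred P] (σ : α → α)
    (c : α → R) : Matrix α α R :=
  of fun v w => if P w ∧ v = σ w then c w else 0

theorem shiftMatrix_congr [DecidableEq α] [Zero R] {P P' : α → Prop} [DecidablePred P]
    [DecidablePred P'] {σ σ' : α → α} {c c' : α → R} (hP : ∀ w, P w ↔ P' w)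
    (hσ : ∀ w, P w → σ w = σ' w) (hc : ∀ w, P w → c w = c' w) :
    shiftMatrix P σ c = shiftMatrix P' σ' c' := by
  ext v w
  by_cases hw : P w
  · simp [shiftMatrix, hw, (hP w).1 hw, hσ w hw, hc w hw]
  · simp [shiftMatrix, hw, (hP w).not.1 hw]

theorem shiftMatrix_mul [Fintype α] [DecidableEq α] [Semiring R] (P Q : α → Prop)
    [DecidablePred P] [DecidablePred Q] (σ τ : α → α) (c d : α → R) :
    shiftMatrix P σ c * shiftMatrix Q τ d =
      shiftMatrix (fun w => Q w ∧ P (τ w)) (σ ∘ τ) (fun w => c (τ w) * d w) := by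
  ext v w
  rw [mul_apply, Finset.sum_eq_single (τ w)]
  · by_cases hQ : Q w <;> by_cases hP : P (τ w) <;> simp [shiftMatrix, hQ, hP]
  · intro u _ hu
    simp [shiftMatrix, hu]
  · simp

theorem conjTranspose_shiftMatrix_mulVec [Fintype α] [DecidableEq α] [CommSemiring R] [StarRing R]
    (P : α → Prop) [DecidablePred P] (σ : α → α) (c : α → R) (ψ : α → R) (u : α) :
    ((shiftMatrix P σ c)ᴴ *ᵥ ψ) u = if P u then star (c u) * ψ (σ u) else 0 := by
  rw [mulVec, dotProduct, Finset.sum_eq_single (σ u)]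
  · by_cases hP : P u <;> simp [shiftMatrix, hP]
  · intro w _ hw
    simp [shiftMatrix, hw]
  · simp

theorem star_dotProduct_mul_conjTranspose_mulVec [Fintype α] [CommSemiring R] [StarRing R]
    (A B : Matrix α α R) (ψ : α → R) :
    star ψ ⬝ᵥ ((A * Bᴴ) *ᵥ ψ) = star (Aᴴ *ᵥ ψ) ⬝ᵥ (Bᴴ *ᵥ ψ) := by
  rw [← mulVec_mulVec, dotProduct_mulVec, star_mulVec, conjTranspose_conjTranspose]

end Matrix

theorem PSSR.even_add {n : ℕ} {ψ : Idx n → ℂ} (hψ : PSSR ψ) {u v : Idx n} (hu : ψ u ≠ 0)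
    (hv : ψ v ≠ 0) : Even (∑ s, (u s : ℕ) + ∑ s, (v s : ℕ)) := by
  rcases hψ with hψ | hψ
  · exact (hψ u hu).add (hψ v hv)
  · exact (hψ u hu).add_odd (hψ v hv)

namespace JordanWigner

variable {n : ℕ}

def occBelow (w : Idx n) (s : Fin n) : ℕ :=
  ∑ t ∈ Finset.univ.filter (· < s), (w t : ℕ)

def overwrite (l : List (Fin n)) (g w : Idx n) : Idx n :=
  fun t => if t ∈ l then g t else w t

def jwExponent (l : List (Fin n)) (g w : Idx n) : ℕ :=
  (l.map fun s => (g s : ℕ) * occBelow w s).sum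

noncomputable def jwString (l : List (Fin n)) (g : Idx n) : Matrix (Idx n) (Idx n) ℂ :=
  (l.map fun s => cdag n s (g s)).prod

theorem occBelow_update (w : Idx n) (s : Fin n) (k : Fin 2) :
    occBelow (Function.update w s k) s = occBelow w s :=
  Finset.sum_congr rfl fun t ht => by
    rw [Function.update_of_ne (Finset.mem_filter.1 ht).2.ne]

theorem adag_eq_shiftMatrix (s : Fin n) :
    adag n s = shiftMatrix (fun w : Idx n => w s = 0) (Function.update · s 1)
      (fun w => (-1) ^ occBelow w s) :=
  rfl

theorem ann_eq_shiftMatrix (s : Fin n) :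
    ann n s = shiftMatrix (fun w : Idx n => w s = 1) (Function.update · s 0)
      (fun w => (-1) ^ occBelow w s) := by
  have raise_iff_lower : ∀ v w : Idx n,
      v s = 0 ∧ w = Function.update v s 1 ↔ w s = 1 ∧ v = Function.update w s 0 := by
    intro v w
    constructor
    · rintro ⟨hv, rfl⟩
      simp [← hv]
    · rintro ⟨hw, rfl⟩
      simp [← hw]
  ext v w
  simp only [ann, conjTranspose_apply, adag_eq_shiftMatrix, shiftMatrix, of_apply,
    raise_iff_lower]
  split_ifs with hvw
  · obtain ⟨-, rfl⟩ := hvw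
    simp [occBelow_update]
  · simp

theorem cdag_eq_shiftMatrix (s : Fin n) (k : Fin 2) :
    cdag n s k = shiftMatrix (fun w : Idx n => w s = 0) (Function.update · s k)
      (fun w => (-1) ^ ((k : ℕ) * occBelow w s)) := by
  rcases Fin.exists_fin_two.1 ⟨k, rfl⟩ with rfl | rfl
  · rw [cdag, if_pos rfl, ann_eq_shiftMatrix, adag_eq_shiftMatrix, shiftMatrix_mul]
    refine shiftMatrix_congr (fun w => by simp) (fun w _ => Function.update_idem ..)
      (fun w _ => ?_)
    simp [occBelow_update, ← pow_add, ← two_mul, pow_mul]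
  · simp [cdag, adag_eq_shiftMatrix]

theorem overwrite_cons {s : Fin n} {l : List (Fin n)} (hs : s ∉ l) (g w : Idx n) :
    overwrite (s :: l) g w = Function.update (overwrite l g w) s (g s) := by
  funext t
  by_cases ht : t = s
  · subst ht
    simp [overwrite]
  · simp [overwrite, ht]

theorem occBelow_overwrite {s : Fin n} {l : List (Fin n)} (hs : ∀ t ∈ l, s < t) (g w : Idx n) :
    occBelow (overwrite l g w) s = occBelow w s :=
  Finset.sum_congr rfl fun t ht => by
    rw [overwrite, if_neg fun htl => (hs t htl).not_gt (Finset.mem_filter.1 ht).2]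

theorem jwString_eq_shiftMatrix {l : List (Fin n)} (hl : l.Pairwise (· < ·)) (g : Idx n) :
    jwString l g = shiftMatrix (fun w : Idx n => ∀ s ∈ l, w s = 0) (overwrite l g)
      (fun w => (-1) ^ jwExponent l g w) := by
  induction l with
  | nil =>
    have overwrite_nil : overwrite [] g = id :=
      funext fun w => funext fun t => by simp [overwrite]
    ext v w
    simp [jwString, jwExponent, shiftMatrix, overwrite_nil, one_apply]
  | cons s l ih =>
    obtain ⟨hs, hl⟩ := List.pairwise_cons.1 hl
    have hsl : s ∉ l := fun h => (hs s h).false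
    rw [jwString, List.map_cons, List.prod_cons, ← jwString, ih hl, cdag_eq_shiftMatrix,
      shiftMatrix_mul]
    refine shiftMatrix_congr (fun w => ?_) (fun w _ => (overwrite_cons hsl g w).symm)
      (fun w _ => ?_)
    · simp [overwrite, hsl, and_comm]
    · simp [jwExponent, occBelow_overwrite hs, pow_add]

theorem cann_eq_conjTranspose (s : Fin n) (k : Fin 2) : cann n s k = (cdag n s k)ᴴ := by
  by_cases hk : k = 0 <;> simp [cann, cdag, hk, ann, conjTranspose_mul]

theorem conjTranspose_jwString_mulVec {l : List (Fin n)} (hl : l.Pairwise (· < ·))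
    (g : Idx n) (ψ : Idx n → ℂ) (u : Idx n) :
    ((jwString l g)ᴴ *ᵥ ψ) u =
      if ∀ s ∈ l, u s = 0 then (-1) ^ jwExponent l g u * ψ (overwrite l g u) else 0 := by
  simp [jwString_eq_shiftMatrix hl, conjTranspose_shiftMatrix_mulVec]

def modeList {k : ℕ} (f : Fin k → Fin n) : List (Fin n) :=
  (List.finRange k).map f

theorem pairwise_modeList {k : ℕ} {f : Fin k → Fin n} (hf : StrictMono f) :
    (modeList f).Pairwise (· < ·) :=
  (List.pairwise_lt_finRange k).map f fun _ _ h => hf h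

theorem Asub_eq_jwString_mul {k : ℕ} (f : Fin k → Fin n) {K J : Idx k} {gK gJ : Idx n}
    (hK : ∀ s, gK (f s) = K s) (hJ : ∀ s, gJ (f s) = J s) :
    Asub n k f K J = jwString (modeList f) gK * (jwString (modeList f) gJ)ᴴ := by
  simp [Asub, jwString, modeList, conjTranspose_list_prod, List.map_reverse, Function.comp_def,
    hK, hJ, cann_eq_conjTranspose]

theorem modeRDM_apply {k : ℕ} (f : Fin k → Fin n) (ψ : Idx n → ℂ) {J K : Idx k}
    {gJ gK : Idx n} (hJ : ∀ s, gJ (f s) = J s) (hK : ∀ s, gK (f s) = K s) :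
    modeRDM n k f ψ J K =
      star ((jwString (modeList f) gK)ᴴ *ᵥ ψ) ⬝ᵥ ((jwString (modeList f) gJ)ᴴ *ᵥ ψ) := by
  rw [modeRDM, of_apply, Asub_eq_jwString_mul f hK hJ,
    star_dotProduct_mul_conjTranspose_mulVec]

section Split

variable {m : ℕ} (h : m ≤ n)

def modeSplit : Fin m ⊕ Fin (n - m) ≃ Fin n :=
  finSumFinEquiv.trans (finCongr (Nat.add_sub_of_le h))

@[simp]
theorem modeSplit_inl (x : Fin m) : modeSplit h (.inl x) = Fin.castLE h x :=
  Fin.ext (by simp [modeSplit])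

@[simp]
theorem modeSplit_inr (y : Fin (n - m)) : modeSplit h (.inr y) = emb2 n m h y :=
  Fin.ext (by simp [modeSplit, emb2])

theorem castLE_lt_emb2 (x : Fin m) (y : Fin (n - m)) : Fin.castLE h x < emb2 n m h y := by
  rw [Fin.lt_def]
  exact Nat.lt_add_right _ x.isLt

theorem strictMono_emb2 : StrictMono (emb2 n m h) := fun _ _ hab => by
  rw [Fin.lt_def] at hab ⊢
  simpa [emb2] using hab

def glueEquiv : Idx m × Idx (n - m) ≃ Idx n :=
  (Equiv.sumArrowEquivProdArrow _ _ _).symm.trans ((modeSplit h).arrowCongr (Equiv.refl _))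

theorem glueEquiv_modeSplit (a : Idx m) (b : Idx (n - m)) (z : Fin m ⊕ Fin (n - m)) :
    glueEquiv h (a, b) (modeSplit h z) = Sum.elim a b z := by
  simp only [glueEquiv, Equiv.trans_apply, Equiv.arrowCongr_apply, Function.comp_apply,
    Equiv.symm_apply_apply, Equiv.refl_apply]
  cases z <;> rfl

@[simp]
theorem glueEquiv_castLE (a : Idx m) (b : Idx (n - m)) (x : Fin m) :
    glueEquiv h (a, b) (Fin.castLE h x) = a x := by
  simpa using glueEquiv_modeSplit h a b (.inl x)

@[simp]
theorem glueEquiv_emb2 (a : Idx m) (b : Idx (n - m)) (y : Fin (n - m)) :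
    glueEquiv h (a, b) (emb2 n m h y) = b y := by
  simpa using glueEquiv_modeSplit h a b (.inr y)

theorem sum_glueEquiv (a : Idx m) (b : Idx (n - m)) :
    ∑ t, (glueEquiv h (a, b) t : ℕ) = ∑ x, (a x : ℕ) + ∑ y, (b y : ℕ) := by
  rw [← (modeSplit h).sum_comp, Fintype.sum_sum_type]
  simp

theorem occBelow_glueEquiv (a : Idx m) (b : Idx (n - m)) (s : Fin n) :
    occBelow (glueEquiv h (a, b)) s =
      ∑ x ∈ Finset.univ.filter (Fin.castLE h · < s), (a x : ℕ) +
        ∑ y ∈ Finset.univ.filter (emb2 n m h · < s), (b y : ℕ) := by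
  simp only [occBelow, Finset.sum_filter]
  rw [← (modeSplit h).sum_comp, Fintype.sum_sum_type]
  simp

theorem conjTranspose_jwString_castLE_mulVec (ψ : Idx n → ℂ) (K a : Idx m)
    (d b : Idx (n - m)) :
    ((jwString (modeList (Fin.castLE h)) (glueEquiv h (K, d)))ᴴ *ᵥ ψ) (glueEquiv h (a, b)) =
      if a = 0 then ψ (glueEquiv h (K, b)) else 0 := by
  rw [conjTranspose_jwString_mulVec (pairwise_modeList (Fin.strictMono_castLE h))]
  have hcond : (∀ s ∈ modeList (Fin.castLE h), glueEquiv h (a, b) s = 0) ↔ a = 0 := by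
    simp [modeList, funext_iff]
  by_cases ha : a = 0
  · subst ha
    have hexp :
        jwExponent (modeList (Fin.castLE h)) (glueEquiv h (K, d)) (glueEquiv h (0, b)) = 0 := by
      simp [jwExponent, modeList, occBelow_glueEquiv, Function.comp_def,
        fun x y => lt_asymm (castLE_lt_emb2 h x y)]
    have hover : overwrite (modeList (Fin.castLE h)) (glueEquiv h (K, d)) (glueEquiv h (0, b)) =
        glueEquiv h (K, b) := by
      funext t
      obtain ⟨z | z, rfl⟩ := (modeSplit h).surjective t
      · simp [overwrite, modeList]
      · simp [overwrite, modeList, (castLE_lt_emb2 h _ _).ne]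
    simp [hcond, hexp, hover]
  · simp [hcond, ha]

theorem conjTranspose_jwString_emb2_mulVec (ψ : Idx n → ℂ) (c a : Idx m) (K b : Idx (n - m)) :
    ((jwString (modeList (emb2 n m h)) (glueEquiv h (c, K)))ᴴ *ᵥ ψ) (glueEquiv h (a, b)) =
      if b = 0 then (-1) ^ ((∑ y, (K y : ℕ)) * ∑ x, (a x : ℕ)) * ψ (glueEquiv h (a, K))
      else 0 := by
  rw [conjTranspose_jwString_mulVec (pairwise_modeList (strictMono_emb2 h))]
  have hcond : (∀ s ∈ modeList (emb2 n m h), glueEquiv h (a, b) s = 0) ↔ b = 0 := by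
    simp [modeList, funext_iff]
  by_cases hb : b = 0
  · subst hb
    have hexp : jwExponent (modeList (emb2 n m h)) (glueEquiv h (c, K)) (glueEquiv h (a, 0)) =
        (∑ y, (K y : ℕ)) * ∑ x, (a x : ℕ) := by
      simp [jwExponent, modeList, occBelow_glueEquiv, Function.comp_def, castLE_lt_emb2,
        ← Fin.sum_univ_def, Finset.sum_mul]
    have hover : overwrite (modeList (emb2 n m h)) (glueEquiv h (c, K)) (glueEquiv h (a, 0)) =
        glueEquiv h (a, K) := by
      funext t
      obtain ⟨z | z, rfl⟩ := (modeSplit h).surjective t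
      · simp [overwrite, modeList, fun x y => (castLE_lt_emb2 h x y).ne']
      · simp [overwrite, modeList]
    simp [hcond, hexp, hover]
  · simp [hcond, hb]

def amplitudeMatrix (ψ : Idx n → ℂ) : Matrix (Idx m) (Idx (n - m)) ℂ :=
  of fun a b => ψ (glueEquiv h (a, b))

theorem modeRDM_castLE_eq (ψ : Idx n → ℂ) :
    modeRDM n m (Fin.castLE h) ψ = amplitudeMatrix h ψ * (amplitudeMatrix h ψ)ᴴ := by
  ext J K
  rw [modeRDM_apply (Fin.castLE h) ψ (gJ := glueEquiv h (J, 0)) (gK := glueEquiv h (K, 0))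
    (by simp) (by simp), dotProduct, ← (glueEquiv h).sum_comp, Fintype.sum_prod_type]
  simp [conjTranspose_jwString_castLE_mulVec, mul_apply, amplitudeMatrix, mul_comm]

theorem modeRDM_emb2_eq {ψ : Idx n → ℂ} (hψ : PSSR ψ) :
    modeRDM n (n - m) (emb2 n m h) ψ = ((amplitudeMatrix h ψ)ᴴ * amplitudeMatrix h ψ)ᵀ := by
  ext J K
  rw [modeRDM_apply (emb2 n m h) ψ (gJ := glueEquiv h (0, J)) (gK := glueEquiv h (0, K))
    (by simp) (by simp), dotProduct, ← (glueEquiv h).sum_comp, Fintype.sum_prod_type]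
  simp only [Pi.star_apply, conjTranspose_jwString_emb2_mulVec]
  simp only [RCLike.star_def, mul_ite, mul_zero, Finset.sum_ite_eq', Finset.mem_univ,
    ↓reduceIte, map_mul, map_pow, map_neg, map_one, amplitudeMatrix, transpose_apply, mul_apply,
    conjTranspose_apply, of_apply]
  refine Finset.sum_congr rfl fun a _ => ?_
  by_cases hK : ψ (glueEquiv h (a, K)) = 0
  · simp [hK]
  by_cases hJ : ψ (glueEquiv h (a, J)) = 0
  · simp [hJ]
  have hKJ : Even (∑ y, (K y : ℕ) + ∑ y, (J y : ℕ)) := by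
    have := hψ.even_add hK hJ
    rw [sum_glueEquiv, sum_glueEquiv, add_add_add_comm, Nat.even_add] at this
    exact this.1 ⟨_, rfl⟩
  rw [mul_mul_mul_comm, ← pow_add, ← add_mul, (hKJ.mul_right _).neg_one_pow, one_mul]

end Split

end JordanWigner

theorem pssr_implies_equispectral_mode_reductions_general (n m : ℕ) (hmn : m < n)
    (ψ : Idx n → ℂ) (hpssr : PSSR ψ) :
    X ^ (2 ^ m) * (modeRDM n (n - m) (emb2 n m hmn.le) ψ).charpoly =
      X ^ (2 ^ (n - m)) * (modeRDM n m (Fin.castLE hmn.le) ψ).charpoly := by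
  have card_idx : ∀ k, Fintype.card (Idx k) = 2 ^ k := by simp
  rw [JordanWigner.modeRDM_emb2_eq hmn.le hpssr, JordanWigner.modeRDM_castLE_eq hmn.le,
    charpoly_transpose, ← card_idx m, ← card_idx (n - m)]
  exact charpoly_mul_comm' _ _

/-- (Theorem 1 of the paper.) If a unit vector `ψ ∈ ℂ^{2^n}` satisfies the
parity superselection rule, then the mode-reduced density matrices `Λ₁` (first `m` modes)
and `Λ₂` (last `n − m` modes) have the same nonzero spectrum with multiplicities:
`X^{2^m} · charpoly(Λ₂) = X^{2^{n−m}} · charpoly(Λ₁)`. -/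
theorem pssr_implies_equispectral_mode_reductions (n m : ℕ) (hm : 1 ≤ m) (hmn : m < n)
    (ψ : Idx n → ℂ) (hψ : star ψ ⬝ᵥ ψ = 1) (hpssr : PSSR ψ) :
    X ^ (2 ^ m) * (modeRDM n (n - m) (emb2 n m hmn.le) ψ).charpoly =
      X ^ (2 ^ (n - m)) * (modeRDM n m (Fin.castLE hmn.le) ψ).charpoly :=
  pssr_implies_equispectral_mode_reductions_general n m hmn ψ hpssr
end

section
/- Let n = 2 and let ψ = c₀₀|00⟩ + c₀₁|01⟩ + c₁₀|10⟩ + c₁₁|11⟩ be a unit vector in ℂ⁴, and set ρ = |ψ⟩⟨ψ|. Let Φ(ρ) = a₁ρa₁† + a₂ρa₂† and let M be the 2×2 one-particle reduced density matrix with entries M(s,t) = ⟨ψ, aₛ†aₜ ψ⟩. Then charpoly(Φ(ρ))(X) = X² · charpoly(M)(X); in particular the nonzero spectra of Φ(ρ) and M coincide with multiplicities. -/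
open Matrix Polynomial

/-- The one-particle reduced density matrix `M(s,t) = ⟨ψ, aₛ†aₜ ψ⟩`. -/
noncomputable def oneRDM (n : ℕ) (ψ : Idx n → ℂ) : Matrix (Fin n) (Fin n) ℂ :=
  Matrix.of fun s t => ev ψ (adag n s * ann n t)

/-!
Let `V` be the `2ⁿ × n` matrix whose `t`-th column is `aₜψ`. Then `Φ(|ψ⟩⟨ψ|) = ∑ₜ aₜψ (aₜψ)* = V Vᴴ`,
while `M(s,t) = ⟨aₛψ, aₜψ⟩` is the Gram matrix `Vᴴ V`. The characteristic polynomials of `V Vᴴ`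
and `Vᴴ V` differ only by the factor `X ^ (2ⁿ - n)`, which is `X²` when `n = 2`.
-/

theorem Matrix.mul_vecMulVec_star_mul_conjTranspose {m n α : Type*} [Fintype n]
    [NonUnitalSemiring α] [StarRing α] (A : Matrix m n α) (u : n → α) :
    A * vecMulVec u (star u) * Aᴴ = vecMulVec (A *ᵥ u) (star (A *ᵥ u)) := by
  rw [mul_vecMulVec, vecMulVec_mul, star_mulVec]

theorem Matrix.mul_conjTranspose_eq_sum_vecMulVec {m n α : Type*} [Fintype n]
    [NonUnitalNonAssocSemiring α] [StarRing α] (V : Matrix m n α) :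
    V * Vᴴ = ∑ t, vecMulVec (fun i => V i t) (star fun i => V i t) := by
  ext i j
  simp only [mul_apply, sum_apply, vecMulVec_apply, conjTranspose_apply, Pi.star_apply]

noncomputable def annColumns (n : ℕ) (ψ : Idx n → ℂ) : Matrix (Idx n) (Fin n) ℂ :=
  Matrix.of fun J t => (ann n t *ᵥ ψ) J

theorem adag_eq_conjTranspose_ann (n : ℕ) (t : Fin n) : adag n t = (ann n t)ᴴ :=
  (conjTranspose_conjTranspose _).symm

theorem sum_ann_mul_vecMulVec_mul_adag (n : ℕ) (ψ : Idx n → ℂ) :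
    ∑ t, ann n t * vecMulVec ψ (star ψ) * adag n t = annColumns n ψ * (annColumns n ψ)ᴴ := by
  simp only [adag_eq_conjTranspose_ann, mul_vecMulVec_star_mul_conjTranspose,
    mul_conjTranspose_eq_sum_vecMulVec, annColumns, of_apply]

theorem oneRDM_eq_conjTranspose_mul (n : ℕ) (ψ : Idx n → ℂ) :
    oneRDM n ψ = (annColumns n ψ)ᴴ * annColumns n ψ := by
  ext s t
  rw [oneRDM, of_apply, ev, adag_eq_conjTranspose_ann, ← mulVec_mulVec, dotProduct_mulVec,
    ← star_mulVec]
  simp only [mul_apply, conjTranspose_apply, annColumns, of_apply, dotProduct, Pi.star_apply]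

theorem charpoly_sum_ann_mul_vecMulVec_mul_adag (n : ℕ) (ψ : Idx n → ℂ) :
    (∑ t, ann n t * vecMulVec ψ (star ψ) * adag n t).charpoly =
      X ^ (2 ^ n - n) * (oneRDM n ψ).charpoly := by
  have hcard : Fintype.card (Fin n) ≤ Fintype.card (Idx n) := by
    simpa using n.lt_two_pow_self.le
  rw [sum_ann_mul_vecMulVec_mul_adag, oneRDM_eq_conjTranspose_mul,
    charpoly_mul_comm_of_le _ _ hcard]
  simp

theorem Phi_charpoly_eq_oneRDM_charpoly_two_mode_general (ψ : Idx 2 → ℂ) :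
    (ann 2 0 * Matrix.vecMulVec ψ (star ψ) * adag 2 0 +
        ann 2 1 * Matrix.vecMulVec ψ (star ψ) * adag 2 1).charpoly =
      X ^ 2 * (oneRDM 2 ψ).charpoly := by
  rw [← Fin.sum_univ_two (fun t => ann 2 t * vecMulVec ψ (star ψ) * adag 2 t)]
  exact charpoly_sum_ann_mul_vecMulVec_mul_adag 2 ψ

/-- For a two-mode unit vector `ψ` with `ρ = |ψ⟩⟨ψ|` and
`Φ(ρ) = a₁ρa₁† + a₂ρa₂†`, the characteristic polynomial of `Φ(ρ)` equals
`X² · charpoly(M)`, where `M` is the one-particle reduced density matrix; in particular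
the nonzero spectra of `Φ(ρ)` and `M` coincide with multiplicities. -/
theorem Phi_charpoly_eq_oneRDM_charpoly_two_mode (ψ : Idx 2 → ℂ)
    (hψ : star ψ ⬝ᵥ ψ = 1) :
    (ann 2 0 * Matrix.vecMulVec ψ (star ψ) * adag 2 0 +
        ann 2 1 * Matrix.vecMulVec ψ (star ψ) * adag 2 1).charpoly =
      X ^ 2 * (oneRDM 2 ψ).charpoly :=
  Phi_charpoly_eq_oneRDM_charpoly_two_mode_general ψ
end
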